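/- Let L be a finitary first-order language that is relational (no function symbols and no constant symbols) and let φ be a Σ⁰₂ L-sentence (of the form ∃x₁…x_k ∀y₁…y_l ψ with ψ quantifier-free). Then there is an L-sentence χ expressing θ(φ). -/

import Mathlib

/-!
In a relational language every nonempty subset of `M` carries a substructure, and quantifier-free
formulas are absolute between `M` and its substructures. So some substructure satisfies
`∃ x̄, ∀ ȳ, ψ` iff there are `x̄` in `M` and a set `S ∋ x̄` with `ψ(x̄, ȳ)` for all `ȳ` from `S`;
then `S` may be shrunk to the `k` witnesses plus one more element (a substructure must be nonempty
even when `k = 0`). Over `k + 1` named elements `z`, the quantifier `∀ ȳ` becomes the finite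
conjunction over all `f : Fin l → Fin (k + 1)` of `ψ(z ∘ castSucc, z ∘ f)`, so `θ(φ)` is
expressed by an existential sentence.
-/

open FirstOrder Language

universe u v

namespace SatSub

/-- Universally quantify the last `l` of `k + l` bound variables. -/
def allsFrom {L : FirstOrder.Language.{u, v}} {k : ℕ} :
    ∀ l : ℕ, L.BoundedFormula Empty (k + l) → L.BoundedFormula Empty k
  | 0, ψ => ψ
  | l + 1, ψ => allsFrom l ψ.all

/-- The Σ⁰₂ sentence `∃ x₁ … x_k, ∀ y₁ … y_l, ψ` with `ψ` quantifier-free. -/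
def sigma2 {L : FirstOrder.Language.{u, v}} (k l : ℕ)
    (ψ : L.BoundedFormula Empty (k + l)) : L.Sentence :=
  (allsFrom l ψ).exs

theorem _root_.Fin.comp_append {α β : Type*} {m n : ℕ} (g : α → β) (xs : Fin m → α)
    (ys : Fin n → α) :
    g ∘ Fin.append xs ys = Fin.append (g ∘ xs) (g ∘ ys) := by
  funext i
  refine Fin.addCases (fun p => ?_) (fun q => ?_) i <;> simp

variable {L : FirstOrder.Language.{u, v}} {M : Type*} [L.Structure M] {k l : ℕ}

theorem realize_allsFrom (ψ : L.BoundedFormula Empty (k + l)) (v : Empty → M)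
    (xs : Fin k → M) :
    (allsFrom l ψ).Realize v xs ↔ ∀ ys : Fin l → M, ψ.Realize v (Fin.append xs ys) := by
  induction l with
  | zero => simp [allsFrom, Fin.append_right_nil]
  | succ l ih =>
    simp only [allsFrom, ih, BoundedFormula.realize_all]
    refine ⟨fun h ys => ?_, fun h ys a => ?_⟩
    · simpa [← Fin.append_snoc, Fin.snoc_init_self] using h (Fin.init ys) (ys (Fin.last l))
    · rw [← Fin.append_snoc]
      exact h _

theorem realize_sigma2 (ψ : L.BoundedFormula Empty (k + l)) :
    M ⊨ sigma2 k l ψ ↔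
      ∃ xs : Fin k → M, ∀ ys : Fin l → M, ψ.Realize default (Fin.append xs ys) := by
  simp only [sigma2, Sentence.Realize, BoundedFormula.realize_exs, realize_allsFrom]

theorem realize_sigma2_substructure {ψ : L.BoundedFormula Empty (k + l)} (hψ : ψ.IsQF)
    (S : L.Substructure M) :
    S ⊨ sigma2 k l ψ ↔ ∃ xs : Fin k → S, ∀ ys : Fin l → S,
      ψ.Realize default (Fin.append ((↑) ∘ xs) ((↑) ∘ ys) : Fin (k + l) → M) := by
  simp only [realize_sigma2]
  refine exists_congr fun xs => forall_congr' fun ys => ?_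
  rw [← hψ.realize_embedding S.subtype, Unique.eq_default (S.subtype ∘ _), Fin.comp_append]
  rfl

noncomputable def thetaSigma2 (k l : ℕ) (ψ : L.BoundedFormula Empty (k + l)) : L.Sentence :=
  (Formula.iInf fun f : Fin l → Fin (k + 1) =>
      ψ.toFormula.relabel (Sum.elim Sum.inl (Sum.inr ∘ Fin.append Fin.castSucc f))).iExs
    (Fin (k + 1))

theorem realize_thetaSigma2 (ψ : L.BoundedFormula Empty (k + l)) :
    M ⊨ thetaSigma2 k l ψ ↔ ∃ z : Fin (k + 1) → M, ∀ f : Fin l → Fin (k + 1),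
      ψ.Realize default (Fin.append (z ∘ Fin.castSucc) (z ∘ f)) := by
  simp only [thetaSigma2, Sentence.Realize, Formula.realize_iExs, Formula.realize_iInf,
    Formula.realize_relabel, BoundedFormula.realize_toFormula]
  refine exists_congr fun z => forall_congr' fun f => ?_
  rw [Unique.eq_default (_ ∘ Sum.inl), ← Fin.comp_append]
  rfl

theorem exists_substructure_of_realize_thetaSigma2 [L.IsRelational]
    {ψ : L.BoundedFormula Empty (k + l)} (hψ : ψ.IsQF) (h : M ⊨ thetaSigma2 k l ψ) :
    ∃ S : L.Substructure M, Nonempty S ∧ S ⊨ sigma2 k l ψ := by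
  obtain ⟨z, hz⟩ := (realize_thetaSigma2 ψ).1 h
  have mem (j : Fin (k + 1)) : z j ∈ Substructure.closure L (Set.range z) :=
    Substructure.subset_closure ⟨j, rfl⟩
  refine ⟨Substructure.closure L (Set.range z), ⟨⟨z 0, mem 0⟩⟩, ?_⟩
  refine (realize_sigma2_substructure hψ _).2 ⟨fun p => ⟨z p.castSucc, mem _⟩, fun ys => ?_⟩
  have (q : Fin l) : ∃ j, z j = ys q :=
    Set.mem_range.1 ((Substructure.mem_closure_iff_of_isRelational L _ _).1 (ys q).2)
  choose f hf using this
  have hys : (↑) ∘ ys = z ∘ f := funext fun q => (hf q).symm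
  rw [hys]
  exact hz f

theorem realize_thetaSigma2_of_substructure {ψ : L.BoundedFormula Empty (k + l)} (hψ : ψ.IsQF)
    (S : L.Substructure M) [Nonempty S] (h : S ⊨ sigma2 k l ψ) : M ⊨ thetaSigma2 k l ψ := by
  obtain ⟨xs, hxs⟩ := (realize_sigma2_substructure hψ S).1 h
  let z : Fin (k + 1) → S := Fin.snoc xs (Classical.arbitrary S)
  refine (realize_thetaSigma2 ψ).2 ⟨(↑) ∘ z, fun f => ?_⟩
  simpa only [Function.comp_assoc, z, Fin.snoc_comp_castSucc] using hxs (z ∘ f)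

theorem realize_thetaSigma2_iff_exists_substructure [L.IsRelational]
    {ψ : L.BoundedFormula Empty (k + l)} (hψ : ψ.IsQF) :
    M ⊨ thetaSigma2 k l ψ ↔ ∃ S : L.Substructure M, Nonempty S ∧ S ⊨ sigma2 k l ψ :=
  ⟨exists_substructure_of_realize_thetaSigma2 hψ,
    fun ⟨S, _, hS⟩ => realize_thetaSigma2_of_substructure hψ S hS⟩

theorem theta_of_sigma2_expressible
    {L : FirstOrder.Language.{u, v}} [L.IsRelational] (φ : L.Sentence)
    (k l : ℕ) (ψ : L.BoundedFormula Empty (k + l)) (hψ : ψ.IsQF)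
    (hφ : φ = sigma2 k l ψ) :
    ∃ χ : L.Sentence,
      ∀ (M : Type (max u v)) [L.Structure M] [Nonempty M],
        M ⊨ χ ↔ ∃ S : L.Substructure M, Nonempty S ∧ S ⊨ φ := by
  subst hφ
  exact ⟨thetaSigma2 k l ψ, fun _ _ _ => realize_thetaSigma2_iff_exists_substructure hψ⟩

end SatSub
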